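/- arXiv:2508.13056 — 14 statements merged into one kernel-verified Lean document; each statement's English description precedes it below -/
import Mathlib

section
/- Let G be a finite group and H a subgroup with 1 < H < G such that the pair (G,H) satisfies condition (F). If M is a normal subgroup of G with H not contained in M, then M is a proper subgroup of H, and moreover the pair (G/M, H/M) satisfies condition (F). -/
/-- The pair `(G, H)` satisfies condition (F): `1 < H < G` and for every
`x ∈ G \ H` and every `h ∈ H`, the element `x` is conjugate in `G` to `x * h`. -/
def CondF {G : Type*} [Group G] (H : Subgroup G) : Prop :=
  H ≠ ⊥ ∧ H ≠ ⊤ ∧ ∀ x ∉ H, ∀ h ∈ H, IsConj x (x * h)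

theorem stmt_0 {G : Type*} [Group G] [Finite G] (H : Subgroup G)
    (hF : CondF H) (M : Subgroup G) [M.Normal] (hM : ¬ H ≤ M) :
    M < H ∧ CondF (H.map (QuotientGroup.mk' M)) := by
  obtain ⟨hbot, htop, hconj⟩ := hF
  have hMH : M ≤ H := by
    intro m hm
    by_contra hmH
    apply hM
    intro h hh
    obtain ⟨c, hc⟩ := hconj m hmH h hh
    have h1 : m * h ∈ M := by
      have h2 : (c : G) * m * (c : G)⁻¹ ∈ M := Subgroup.Normal.conj_mem ‹M.Normal› m hm c
      have h3 : (c : G) * m * (c : G)⁻¹ = m * h := by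
        rw [hc.eq]; group
      rwa [h3] at h2
    have : h = m⁻¹ * (m * h) := by group
    rw [this]
    exact M.mul_mem (M.inv_mem hm) h1
  have hlt : M < H := lt_of_le_of_ne hMH (fun e => hM (e ▸ le_rfl))
  refine ⟨hlt, ?_, ?_, ?_⟩
  · intro hb
    rw [Subgroup.map_eq_bot_iff, QuotientGroup.ker_mk'] at hb
    exact hM hb
  · intro ht
    apply htop
    ext g
    simp only [Subgroup.mem_top, iff_true]
    have : QuotientGroup.mk' M g ∈ H.map (QuotientGroup.mk' M) := ht ▸ Subgroup.mem_top _
    obtain ⟨h, hh, he⟩ := this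
    have hmem : h⁻¹ * g ∈ M := by
      rw [← QuotientGroup.ker_mk' M, MonoidHom.mem_ker, map_mul, map_inv, he]
      group
    have : g = h * (h⁻¹ * g) := by group
    rw [this]
    exact H.mul_mem hh (hMH hmem)
  · intro xb hxb hb hhb
    obtain ⟨x, rfl⟩ := QuotientGroup.mk'_surjective M xb
    obtain ⟨h, hh, rfl⟩ := hhb
    have hx : x ∉ H := fun hx => hxb ⟨x, hx, rfl⟩
    have := (QuotientGroup.mk' M).map_isConj (hconj x hx h hh)
    rwa [map_mul] at this
end

section
/- Let G be a finite group and H a subgroup with 1 < H < G such that the pair (G,H) satisfies condition (F). Then the center Z(G) is contained in H and H is contained in the derived subgroup G' of G. -/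
open scoped commutatorElement

theorem stmt_1 {G : Type*} [Group G] [Finite G] (H : Subgroup G)
    (hF : CondF H) :
    Subgroup.center G ≤ H ∧ H ≤ commutator G := by
  obtain ⟨hbot, htop, hconj⟩ := hF
  constructor
  · intro z hz
    by_contra hzH
    -- pick h ∈ H, h ≠ 1
    obtain ⟨h, hh, hne⟩ : ∃ h ∈ H, h ≠ 1 := by
      by_contra hcon
      push_neg at hcon
      exact hbot (Subgroup.eq_bot_iff_forall H |>.mpr hcon)
    obtain ⟨c, hc⟩ := hconj z hzH h hh
    rw [SemiconjBy] at hc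
    have hcen : (c : G) * z = z * c := Subgroup.mem_center_iff.mp hz c
    rw [hcen, mul_assoc] at hc
    have h1 : (c : G) = h * c := mul_left_cancel hc
    exact hne (by rwa [eq_comm, mul_eq_right] at h1)
  · intro h hh
    obtain ⟨x, hx⟩ : ∃ x, x ∉ H := by
      by_contra hcon
      push_neg at hcon
      exact htop (Subgroup.eq_top_iff' H |>.mpr hcon)
    obtain ⟨c, hc⟩ := hconj x hx h hh
    rw [SemiconjBy] at hc
    have hform : h = ⁅x⁻¹, (c : G)⁆ := by
      rw [commutatorElement_def, inv_inv, mul_assoc x⁻¹ (c : G) x, hc]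
      group
    rw [hform, commutator_def]
    exact Subgroup.commutator_mem_commutator (Subgroup.mem_top _) (Subgroup.mem_top _)
end

section
/- Let p be a prime and let G be a finite p-group with a subgroup H satisfying 1 < H < G. If the pair (G,H) satisfies condition (F), then H is a normal subgroup of G. -/
lemma center_le_of_condF {G : Type*} [Group G] (H : Subgroup G) (hF : CondF H) :
    Subgroup.center G ≤ H := by
  intro z hz
  by_contra hzH
  obtain ⟨h, hhH, hne⟩ := (Subgroup.nontrivial_iff_exists_ne_one H).mp
    ((Subgroup.nontrivial_iff_ne_bot H).mpr hF.1)
  obtain ⟨c, hc⟩ := hF.2.2 z hzH h hhH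
  -- hc : c * z = z * h * c
  have hzc : c * z = z * c := Subgroup.mem_center_iff.mp hz c
  apply hne
  have h1 : z * ↑c = z * h * ↑c := hzc ▸ hc
  exact left_eq_mul.mp (mul_right_cancel h1)

lemma aux (p : ℕ) (hp : p.Prime) : ∀ (n : ℕ) {G : Type*} [Group G] [Finite G],
    Nat.card G ≤ n → IsPGroup p G → ∀ H : Subgroup G, CondF H → H.Normal := by
  intro n
  induction n with
  | zero => intro G _ _ hcard _ H _; exact absurd hcard (by simpa using Nat.card_pos.ne')
  | succ n ih =>
    intro G _ _ hcard hG H hF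
    have hZH : Subgroup.center G ≤ H := center_le_of_condF H hF
    by_cases hHZ : H = Subgroup.center G
    · rw [hHZ]; infer_instance
    · -- quotient by center
      haveI : Fact p.Prime := ⟨hp⟩
      haveI : Nontrivial G := by
        obtain ⟨h, hhH, hne⟩ := (Subgroup.nontrivial_iff_exists_ne_one H).mp
          ((Subgroup.nontrivial_iff_ne_bot H).mpr hF.1)
        exact ⟨h, 1, hne⟩
      set Z := Subgroup.center G with hZ
      let f : G →* G ⧸ Z := QuotientGroup.mk' Z
      have hker : f.ker = Z := QuotientGroup.ker_mk' Z
      have hcomap : (H.map f).comap f = H := by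
        rw [Subgroup.comap_map_eq, hker, sup_eq_left.mpr hZH]
      -- card bound
      haveI : Nontrivial Z := hG.center_nontrivial
      have hcardeq : Nat.card G = Nat.card (G ⧸ Z) * Nat.card Z :=
        Subgroup.card_eq_card_quotient_mul_card_subgroup Z
      have h2 : 2 ≤ Nat.card Z := Finite.one_lt_card
      have hposQ : 0 < Nat.card (G ⧸ Z) := Nat.card_pos
      have hlt : Nat.card (G ⧸ Z) ≤ n := by nlinarith
      have hpgrpQ : IsPGroup p (G ⧸ Z) := hG.to_quotient Z
      have hFQ : CondF (H.map f) := by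
        refine ⟨?_, ?_, ?_⟩
        · -- map ≠ ⊥
          intro hbot
          apply hHZ
          refine le_antisymm ?_ hZH
          intro h hh
          have : f h ∈ H.map f := Subgroup.mem_map_of_mem f hh
          rw [hbot, Subgroup.mem_bot] at this
          have : h ∈ f.ker := this
          rwa [hker] at this
        · intro htop
          apply hF.2.1
          have := congrArg (Subgroup.comap f) htop
          rwa [hcomap, Subgroup.comap_top] at this
        · intro xq hxq hq hhq
          obtain ⟨x, rfl⟩ := QuotientGroup.mk'_surjective Z xq
          obtain ⟨h, hhH, rfl⟩ := Subgroup.mem_map.mp hhq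
          have hxH : x ∉ H := fun hx => hxq (Subgroup.mem_map_of_mem f hx)
          have := f.map_isConj (hF.2.2 x hxH h hhH)
          rwa [map_mul] at this
      have hnorm : (H.map f).Normal := ih hlt hpgrpQ (H.map f) hFQ
      have := hnorm.comap f
      rwa [hcomap] at this

theorem stmt_2 {G : Type*} [Group G] [Finite G] (p : ℕ) (hp : p.Prime)
    (hG : IsPGroup p G) (H : Subgroup G) (hF : CondF H) :
    H.Normal :=
  aux p hp (Nat.card G) le_rfl hG H hF
end

section
/- Let G be a finite group and H a subgroup with 1 < H < G such that the pair (G,H) satisfies condition (F) and H is not normal in G. Let N be the normal closure of H in G. Then N equals the union of all conjugates H^g of H over g ∈ G; consequently 1 < N < G. -/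
open MulAction

/-- A finite group has an element lying in no conjugate of a given proper
subgroup (Jordan's lemma, proved via Burnside's counting argument on `G ⧸ H`). -/
theorem exists_fpf_aux {G : Type*} [Group G] [Finite G] (H : Subgroup G) (hH : H ≠ ⊤) :
    ∃ a : G, ∀ g : G, g⁻¹ * a * g ∉ H := by
  classical
  have _inst := Fintype.ofFinite G
  have hnt : Nontrivial (G ⧸ H) := by
    obtain ⟨x, hx⟩ : ∃ x, x ∉ H := by
      by_contra h; push_neg at h; exact hH ((Subgroup.eq_top_iff' H).mpr h)
    exact ⟨⟨(x : G ⧸ H), ((1:G) : G ⧸ H), fun h => hx (by simpa using inv_mem (QuotientGroup.eq.mp h))⟩⟩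
  have hcard2 : 2 ≤ Fintype.card (G ⧸ H) := Fintype.one_lt_card
  have hb := MulAction.sum_card_fixedBy_eq_card_orbits_mul_card_group G (G ⧸ H)
  have horb : Fintype.card (Quotient (orbitRel G (G ⧸ H))) = 1 := by
    rw [Fintype.card_eq_one_iff]
    refine ⟨Quotient.mk _ (((1:G) : G ⧸ H)), ?_⟩
    refine Quotient.ind (fun q => ?_)
    refine Quotient.sound ?_
    obtain ⟨g, hg⟩ := MulAction.exists_smul_eq G (((1:G) : G ⧸ H)) q
    exact ⟨g, hg⟩
  rw [horb, one_mul] at hb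
  by_contra hcon
  push_neg at hcon
  have hpos : ∀ a : G, 1 ≤ Fintype.card (fixedBy (G ⧸ H) a) := by
    intro a
    obtain ⟨g, hg⟩ := hcon a
    refine Fintype.card_pos_iff.mpr ⟨⟨(↑g : G ⧸ H), ?_⟩⟩
    show a • (↑g : G ⧸ H) = ↑g
    show (↑(a * g) : G ⧸ H) = ↑g
    rw [QuotientGroup.eq]
    simpa [mul_assoc] using (inv_mem hg : (g⁻¹ * a * g)⁻¹ ∈ H)
  have h1 : Fintype.card (fixedBy (G ⧸ H) (1 : G)) = Fintype.card (G ⧸ H) := by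
    apply Fintype.card_congr
    refine Equiv.subtypeUnivEquiv (fun q => ?_)
    simp [MulAction.mem_fixedBy]
  have hsum : Fintype.card G - 1 + Fintype.card (G ⧸ H)
      ≤ ∑ a : G, Fintype.card (fixedBy (G ⧸ H) a) := by
    rw [← Finset.sum_erase_add _ _ (Finset.mem_univ (1 : G)), h1]
    gcongr
    calc Fintype.card G - 1 = (Finset.univ.erase (1 : G)).card := by
          rw [Finset.card_erase_of_mem (Finset.mem_univ _), Finset.card_univ]
      _ = ∑ _a ∈ Finset.univ.erase (1 : G), 1 := by simp
      _ ≤ _ := Finset.sum_le_sum (fun a _ => hpos a)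
  rw [hb] at hsum
  have hGpos : 1 ≤ Fintype.card G := Fintype.card_pos
  omega

theorem stmt_3 {G : Type*} [Group G] [Finite G] (H : Subgroup G)
    (hF : CondF H) (hnn : ¬ H.Normal)
    (N : Subgroup G) (hN : N = Subgroup.normalClosure (H : Set G)) :
    (N : Set G) = ⋃ g : G, (fun x => g⁻¹ * x * g) '' (H : Set G) ∧
      ⊥ < N ∧ N < ⊤ := by
  obtain ⟨hbot, htop, hconj⟩ := hF
  set S : Set G := ⋃ g : G, (fun x => g⁻¹ * x * g) '' (H : Set G) with hS
  have memS : ∀ a : G, a ∈ S ↔ ∃ g : G, ∃ h ∈ H, g⁻¹ * h * g = a := by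
    intro a; simp [hS]
  -- S is closed under conjugation
  have hconjS : ∀ a k : G, a ∈ S → k * a * k⁻¹ ∈ S := by
    intro a k ha
    obtain ⟨g, h, hh, rfl⟩ := (memS a).mp ha
    exact (memS _).mpr ⟨g * k⁻¹, h, hh, by group⟩
  -- key: condition (F) gives closure under right multiplication by elements of H
  have key : ∀ a : G, a ∈ S → ∀ h ∈ H, a * h ∈ S := by
    intro a ha h hh
    by_cases haH : a ∈ H
    · exact (memS _).mpr ⟨1, a * h, mul_mem haH hh, by group⟩
    · obtain ⟨c, hc⟩ := hconj a haH h hh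
      have hc' : (c : G) * a = (a * h) * (c : G) := hc
      have heq : a * h = (c : G) * a * ((c : G))⁻¹ := by
        rw [eq_mul_inv_iff_mul_eq]; exact hc'.symm
      rw [heq]
      exact hconjS a (c : G) ha
  have mulS : ∀ a b : G, a ∈ S → b ∈ S → a * b ∈ S := by
    intro a b ha hb
    obtain ⟨k, h, hh, rfl⟩ := (memS b).mp hb
    have p1 : k * a * k⁻¹ ∈ S := hconjS a k ha
    have p2 : k * a * k⁻¹ * h ∈ S := key _ p1 h hh
    have p3 : k⁻¹ * (k * a * k⁻¹ * h) * (k⁻¹)⁻¹ ∈ S := hconjS _ k⁻¹ p2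
    have : a * (k⁻¹ * h * k) = k⁻¹ * (k * a * k⁻¹ * h) * (k⁻¹)⁻¹ := by group
    rw [this]; exact p3
  -- S is a normal subgroup containing H
  let K : Subgroup G :=
    { carrier := S
      one_mem' := (memS 1).mpr ⟨1, 1, one_mem H, by group⟩
      mul_mem' := fun {a b} ha hb => mulS a b ha hb
      inv_mem' := fun {a} ha => by
        obtain ⟨g, h, hh, rfl⟩ := (memS a).mp ha
        exact (memS _).mpr ⟨g, h⁻¹, inv_mem hh, by group⟩ }
  have hKnormal : K.Normal := ⟨fun a ha k => hconjS a k ha⟩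
  have hHK : (H : Set G) ⊆ ↑K := fun h hh => (memS h).mpr ⟨1, h, hh, by group⟩
  have hNK : N ≤ K := by
    rw [hN]; exact Subgroup.normalClosure_le_normal hHK
  have hSN : S ⊆ (N : Set G) := by
    intro a ha
    obtain ⟨g, h, hh, rfl⟩ := (memS a).mp ha
    have hhN : h ∈ N := by
      rw [hN]; exact Subgroup.subset_normalClosure hh
    have hNnorm : N.Normal := by rw [hN]; exact Subgroup.normalClosure_normal
    have := hNnorm.conj_mem h hhN g⁻¹
    simpa using this
  have hmain : (N : Set G) = S := Set.Subset.antisymm hNK hSN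
  refine ⟨hmain, ?_, ?_⟩
  · rw [bot_lt_iff_ne_bot]
    intro h
    apply hbot
    have : H ≤ N := by rw [hN]; exact Subgroup.le_normalClosure
    rw [h, le_bot_iff] at this
    exact this
  · rw [lt_top_iff_ne_top]
    intro h
    obtain ⟨a, ha⟩ := exists_fpf_aux H htop
    have haN : a ∈ N := h ▸ Subgroup.mem_top a
    have haS : a ∈ S := hmain ▸ haN
    obtain ⟨g, hh, hhH, hgh⟩ := (memS a).mp haS
    apply ha g⁻¹
    have : (g⁻¹)⁻¹ * a * g⁻¹ = hh := by rw [← hgh]; group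
    rw [this]; exact hhH
end

section
/- Let G be a finite group and H a subgroup with 1 < H < G such that the pair (G,H) satisfies condition (F). Let N be the normal closure of H in G. Then (G,N) is a Camina pair, that is, N is a nontrivial proper normal subgroup of G and for every x ∈ G \ N and every n ∈ N, the element x is conjugate in G to xn. -/
/-- `(G, N)` is a Camina pair: `N` is a nontrivial proper normal subgroup of `G`
and every `g ∈ G \ N` is conjugate in `G` to every element of the coset `g * N`. -/
def IsCaminaPair {G : Type*} [Group G] (N : Subgroup G) : Prop :=
  N ≠ ⊥ ∧ N ≠ ⊤ ∧ N.Normal ∧ ∀ x ∉ N, ∀ n ∈ N, IsConj x (x * n)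

/-- Key induction: if `P` is conjugation-invariant and guarantees that all conjugates of
the element lie outside `H`, then condition (F) propagates along the normal closure. -/
lemma condF_key {G : Type*} [Group G] [Finite G] {H : Subgroup G}
    (hf : ∀ x ∉ H, ∀ h ∈ H, IsConj x (x * h))
    (P : G → Prop) (hconj : ∀ x y : G, IsConj x y → P x → P y)
    (hPH : ∀ x : G, P x → ∀ c : G, c⁻¹ * x * c ∉ H) :
    ∀ n ∈ Subgroup.normalClosure (H : Set G), ∀ x, P x → IsConj x (x * n) := by
  intro n hn
  have hpow : ∀ a : G, (∀ x, P x → IsConj x (x * a)) →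
      ∀ m : ℕ, ∀ x, P x → IsConj x (x * a ^ m) := by
    intro a ha m
    induction m with
    | zero => intro x _; simpa using IsConj.refl x
    | succ k ih =>
      intro x hx
      have h1 := ih x hx
      have h2 : P (x * a ^ k) := hconj _ _ h1 hx
      have h3 := ha _ h2
      have := h1.trans h3
      rwa [mul_assoc, ← pow_succ] at this
  refine Subgroup.closure_induction (fun s hs => ?_) ?_
    (fun a b _ _ iha ihb => ?_) (fun a _ iha => ?_) hn
  · -- generator case : s is a conjugate of an element of H
    obtain ⟨h, hh, hcj⟩ := Group.mem_conjugatesOfSet_iff.1 hs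
    obtain ⟨c, rfl⟩ := isConj_iff.1 hcj
    intro x hx
    have hyH : c⁻¹ * x * c ∉ H := hPH x hx c
    have e1 : IsConj x (c⁻¹ * x * c) := isConj_iff.2 ⟨c⁻¹, by group⟩
    have e2 := hf _ hyH h hh
    have e3 : IsConj ((c⁻¹ * x * c) * h) (x * (c * h * c⁻¹)) :=
      isConj_iff.2 ⟨c, by group⟩
    exact (e1.trans e2).trans e3
  · intro x _; simpa using IsConj.refl x
  · intro x hx
    have h1 := iha x hx
    have h2 : P (x * a) := hconj _ _ h1 hx
    have h3 := ihb _ h2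
    have := h1.trans h3
    rwa [mul_assoc] at this
  · intro x hx
    have h0 : 0 < orderOf a := orderOf_pos a
    have he : a⁻¹ = a ^ (orderOf a - 1) := by
      have h1 : a ^ (orderOf a - 1) * a = 1 := by
        rw [← pow_succ, Nat.sub_add_cancel h0, pow_orderOf_eq_one]
      exact inv_eq_of_mul_eq_one_left h1
    rw [he]
    exact hpow a iha _ x hx

/-- In a finite group, a proper subgroup does not meet every conjugacy class:
there is an element not conjugate to any element of `H`. -/
lemma exists_not_conj {G : Type*} [Group G] [Finite G] (H : Subgroup G) (hH : H ≠ ⊤) :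
    ∃ x : G, ∀ h ∈ H, ¬ IsConj h x := by
  classical
  cases nonempty_fintype G
  by_contra hcon
  push_neg at hcon
  set Hf : Finset G := Set.toFinset (H : Set G) with hHf
  set k := Hf.card with hk
  have hinj : ∀ c : G, Function.Injective (fun h : G => c * h * c⁻¹) := by
    intro c a b hab
    simp only at hab
    exact mul_left_cancel (mul_right_cancel hab)
  have hresp : ∀ a b : G, (QuotientGroup.leftRel H) a b →
      (fun c => Hf.image (fun h => c * h * c⁻¹)) a
        = (fun c => Hf.image (fun h => c * h * c⁻¹)) b := by
    intro a b hab
    rw [QuotientGroup.leftRel_apply] at hab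
    obtain ⟨h₀, hh₀, rfl⟩ : ∃ h₀ ∈ H, b = a * h₀ := ⟨_, hab, by group⟩
    ext x
    simp only [Finset.mem_image, hHf, Set.mem_toFinset, SetLike.mem_coe]
    constructor
    · rintro ⟨h, hh, rfl⟩
      exact ⟨h₀⁻¹ * h * h₀, H.mul_mem (H.mul_mem (H.inv_mem hh₀) hh) hh₀, by group⟩
    · rintro ⟨h, hh, rfl⟩
      exact ⟨h₀ * h * h₀⁻¹, H.mul_mem (H.mul_mem hh₀ hh) (H.inv_mem hh₀), by group⟩
  set ψ : G ⧸ H → Finset G :=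
    fun q => Quotient.liftOn' q (fun c => Hf.image (fun h => c * h * c⁻¹)) hresp with hψ
  have hψmk : ∀ c : G, ψ (QuotientGroup.mk c) = Hf.image (fun h => c * h * c⁻¹) :=
    fun c => rfl
  have hcover : ∀ x : G, ∃ q : G ⧸ H, x ∈ ψ q := by
    intro x
    obtain ⟨h, hh, hc⟩ := hcon x
    obtain ⟨c, hc2⟩ := isConj_iff.1 hc
    refine ⟨QuotientGroup.mk c, ?_⟩
    rw [hψmk]
    exact Finset.mem_image.2 ⟨h, by simp [hHf, hh], hc2⟩
  have hcard_f : ∀ q : G ⧸ H, (ψ q).card = k := by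
    refine Quotient.ind (fun c => ?_)
    show (Hf.image (fun h => c * h * c⁻¹)).card = k
    rw [Finset.card_image_of_injective _ (hinj c)]
  have hone : ∀ q : G ⧸ H, (1 : G) ∈ ψ q := by
    refine Quotient.ind (fun c => ?_)
    show (1 : G) ∈ Hf.image (fun h => c * h * c⁻¹)
    exact Finset.mem_image.2 ⟨1, Set.mem_toFinset.2 H.one_mem, by group⟩
  -- two distinct cosets
  have hm : 2 ≤ Fintype.card (G ⧸ H) := by
    obtain ⟨x, hx⟩ : ∃ x : G, x ∉ H := by
      by_contra hc
      push_neg at hc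
      exact hH ((Subgroup.eq_top_iff' H).2 hc)
    have hne : (QuotientGroup.mk x : G ⧸ H) ≠ QuotientGroup.mk 1 := by
      intro hEq
      rw [QuotientGroup.eq] at hEq
      simp only [mul_one] at hEq
      exact hx (by simpa using H.inv_mem hEq)
    exact Fintype.one_lt_card_iff_nontrivial.2 ⟨_, _, hne⟩
  -- counting
  have h1 : (Finset.univ : Finset G) ⊆
      insert 1 (Finset.univ.biUnion fun q : G ⧸ H => (ψ q).erase 1) := by
    intro x _
    rcases eq_or_ne x 1 with rfl | hx
    · exact Finset.mem_insert_self _ _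
    · obtain ⟨q, hq⟩ := hcover x
      exact Finset.mem_insert_of_mem
        (Finset.mem_biUnion.2 ⟨q, Finset.mem_univ _, Finset.mem_erase.2 ⟨hx, hq⟩⟩)
  have h2 := Finset.card_le_card h1
  have h3 : (Finset.univ.biUnion fun q : G ⧸ H => (ψ q).erase 1).card ≤
      Fintype.card (G ⧸ H) * (k - 1) := by
    calc (Finset.univ.biUnion fun q : G ⧸ H => (ψ q).erase 1).card
        ≤ ∑ q : G ⧸ H, ((ψ q).erase 1).card := Finset.card_biUnion_le
      _ = ∑ q : G ⧸ H, (k - 1) := by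
          refine Finset.sum_congr rfl fun q _ => ?_
          rw [Finset.card_erase_of_mem (hone q), hcard_f q]
      _ = Fintype.card (G ⧸ H) * (k - 1) := by
          rw [Finset.sum_const, smul_eq_mul, Finset.card_univ]
  have h4 : Fintype.card G ≤ 1 + Fintype.card (G ⧸ H) * (k - 1) := by
    have := h2.trans (Finset.card_insert_le _ _)
    rw [Finset.card_univ] at this
    omega
  have hGcard : Fintype.card G = Fintype.card (G ⧸ H) * k := by
    have := Subgroup.card_eq_card_quotient_mul_card_subgroup (α := G) H
    simp only [Nat.card_eq_fintype_card] at this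
    rw [this]
    congr 1
    rw [hk, hHf, Set.toFinset_card]
    exact Fintype.card_congr (Equiv.refl _)
  have hkpos : 1 ≤ k := by
    rw [hk, hHf]
    exact Finset.card_pos.2 ⟨1, Set.mem_toFinset.2 H.one_mem⟩
  set m := Fintype.card (G ⧸ H)
  have he : m * (k - 1) + m = m * k := by
    have : (k - 1) + 1 = k := Nat.sub_add_cancel hkpos
    calc m * (k - 1) + m = m * ((k - 1) + 1) := by ring
      _ = m * k := by rw [this]
  omega

theorem stmt_4 {G : Type*} [Group G] [Finite G] (H : Subgroup G)
    (hF : CondF H) (N : Subgroup G)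
    (hN : N = Subgroup.normalClosure (H : Set G)) :
    IsCaminaPair N := by
  obtain ⟨hbot, htop, hf⟩ := hF
  subst hN
  have hnormal : (Subgroup.normalClosure (H : Set G)).Normal := inferInstance
  have hle : H ≤ Subgroup.normalClosure (H : Set G) := Subgroup.le_normalClosure
  refine ⟨?_, ?_, hnormal, ?_⟩
  · intro h
    apply hbot
    rw [h] at hle
    exact le_bot_iff.1 hle
  · intro h
    obtain ⟨x, hx⟩ := exists_not_conj H htop
    have hP : ∀ y : G, (∀ h ∈ H, ¬ IsConj h y) → ∀ n ∈ Subgroup.normalClosure (H : Set G),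
        IsConj y (y * n) := by
      intro y hy n hn
      refine condF_key hf (fun z => ∀ h ∈ H, ¬ IsConj h z) ?_ ?_ n hn y hy
      · intro a b hab ha h hh hconj
        exact ha h hh (hconj.trans hab.symm)
      · intro a ha c hc
        exact ha _ hc (isConj_iff.2 ⟨c, by group⟩)
    have hxmem : x⁻¹ ∈ Subgroup.normalClosure (H : Set G) := by rw [h]; trivial
    have := hP x hx x⁻¹ hxmem
    rw [mul_inv_cancel] at this
    have hx1 : x = 1 := by
      have := this.symm
      rwa [isConj_one_right] at this
    exact hx 1 H.one_mem (by rw [hx1])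
  · intro x hx n hn
    refine condF_key hf (fun z => z ∉ Subgroup.normalClosure (H : Set G)) ?_ ?_ n hn x hx
    · intro a b hab ha hb
      obtain ⟨c, rfl⟩ := isConj_iff.1 hab
      apply ha
      have := hnormal.conj_mem _ hb c⁻¹
      simpa [mul_assoc] using this
    · intro a ha c hc
      apply ha
      have := hnormal.conj_mem _ (hle hc) c
      have he : c * (c⁻¹ * a * c) * c⁻¹ = a := by group
      rwa [he] at this
end

section
/- Let G be a finite group and H a subgroup with 1 < H < G such that the pair (G,H) satisfies condition (F) and H is not normal in G. Let N be the normal closure of H in G. Then H is a normal subgroup of N and the quotient N/H is abelian. -/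
namespace CondFProofAux

variable {G : Type*} [Group G]

/-- The conjugate subgroup `g H g⁻¹`. -/
def cj (g : G) (H : Subgroup G) : Subgroup G := H.map (MulAut.conj g).toMonoidHom

lemma mem_cj {g x : G} {H : Subgroup G} : x ∈ cj g H ↔ g⁻¹ * x * g ∈ H := by
  constructor
  · rintro ⟨h, hh, rfl⟩
    simpa [MulAut.conj_apply, mul_assoc] using hh
  · intro hx
    exact ⟨g⁻¹ * x * g, hx, by simp [MulAut.conj_apply]; group⟩

lemma card_cj (g : G) (H : Subgroup G) : Nat.card (cj g H) = Nat.card H :=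
  (Nat.card_congr (H.equivMapOfInjective _ (MulAut.conj g).injective).toEquiv).symm

lemma exists_diff [Finite G] {g₁ g₂ : G} {H : Subgroup G}
    (h : ∃ x, x ∈ cj g₁ H ∧ x ∉ cj g₂ H) : ∃ y, y ∈ cj g₂ H ∧ y ∉ cj g₁ H := by
  by_contra hc
  push_neg at hc
  have hle : cj g₂ H ≤ cj g₁ H := fun y hy => hc y hy
  have heq : cj g₂ H = cj g₁ H :=
    Subgroup.eq_of_le_of_card_ge hle (by rw [card_cj, card_cj])
  obtain ⟨x, hx1, hx2⟩ := h
  exact hx2 (heq ▸ hx1)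

/-- A subgroup is not covered by two subgroups unless one contains it. -/
lemma not_cover {A B C : Subgroup G} {x y : G} (hxA : x ∈ A) (hxB : x ∉ B)
    (hyA : y ∈ A) (hyC : y ∉ C) : ∃ w, w ∈ A ∧ w ∉ B ∧ w ∉ C := by
  by_cases hxC : x ∈ C
  · by_cases hyB : y ∈ B
    · refine ⟨x * y, A.mul_mem hxA hyA, ?_, ?_⟩
      · intro h
        have hxB' : x * y * y⁻¹ ∈ B := B.mul_mem h (B.inv_mem hyB)
        exact hxB (by simpa [mul_assoc] using hxB')
      · intro h
        have hyC' : x⁻¹ * (x * y) ∈ C := C.mul_mem (C.inv_mem hxC) h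
        exact hyC (by simpa [← mul_assoc] using hyC')
    · exact ⟨y, hyA, hyB, hyC⟩
  · exact ⟨x, hxA, hxB, hxC⟩

lemma class_in_S {H : Subgroup G} {a x : G} (ha : a ∈ H) (hc : IsConj a x) :
    ∃ g, x ∈ cj g H := by
  obtain ⟨u, rfl⟩ := isConj_iff.1 hc
  refine ⟨u, mem_cj.2 ?_⟩
  have e : u⁻¹ * (u * a * u⁻¹) * u = a := by group
  rwa [e]

variable {H : Subgroup G} (hF : ∀ x ∉ H, ∀ h ∈ H, IsConj x (x * h))

include hF

lemma F_cj (g x : G) (hx : x ∉ cj g H) (k : G) (hk : k ∈ cj g H) : IsConj x (x * k) := by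
  have h1 : g⁻¹ * x * g ∉ H := fun h => hx (mem_cj.2 h)
  have h2 := hF _ h1 _ (mem_cj.1 hk)
  have e : g⁻¹ * x * g * (g⁻¹ * k * g) = g⁻¹ * (x * k) * g := by group
  rw [e] at h2
  have c1 : IsConj x (g⁻¹ * x * g) := isConj_iff.2 ⟨g⁻¹, by group⟩
  exact c1.trans (h2.trans (isConj_iff.2 ⟨g, by group⟩))

lemma F_cj_left (g x : G) (hx : x ∉ cj g H) (k : G) (hk : k ∈ cj g H) : IsConj x (k * x) := by
  have hx' : x ∉ cj (x⁻¹ * g) H := by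
    intro h
    apply hx
    rw [mem_cj] at h ⊢
    have e : (x⁻¹ * g)⁻¹ * x * (x⁻¹ * g) = g⁻¹ * x * g := by group
    rwa [e] at h
  have hk' : x⁻¹ * k * x ∈ cj (x⁻¹ * g) H := by
    rw [mem_cj]
    have e : (x⁻¹ * g)⁻¹ * (x⁻¹ * k * x) * (x⁻¹ * g) = g⁻¹ * k * g := by group
    rw [e]
    exact mem_cj.1 hk
  have h := F_cj hF (x⁻¹ * g) x hx' _ hk'
  have e : x * (x⁻¹ * k * x) = k * x := by group
  rwa [e] at h

lemma link {g₁ g₂ a b : G} (ha₁ : a ∈ cj g₁ H) (ha₂ : a ∉ cj g₂ H)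
    (hb₂ : b ∈ cj g₂ H) (hb₁ : b ∉ cj g₁ H) : IsConj a b :=
  (F_cj hF g₂ a ha₂ b hb₂).trans (F_cj_left hF g₁ b hb₁ a ha₁).symm

variable [Finite G]

lemma same_diff {g₁ g₂ x y : G} (hx : x ∈ cj g₁ H) (hx2 : x ∉ cj g₂ H)
    (hy : y ∈ cj g₁ H) (hy2 : y ∉ cj g₂ H) : IsConj x y := by
  obtain ⟨z, hz2, hz1⟩ := exists_diff ⟨x, hx, hx2⟩
  exact (link hF hx hx2 hz2 hz1).trans (link hF hy hy2 hz2 hz1).symm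

lemma tri {g₁ g₂ g₃ : G} {x y : G} (hx1 : x ∈ cj g₁ H) (hx2 : x ∉ cj g₂ H)
    (hy1 : y ∈ cj g₁ H) (hy3 : y ∉ cj g₃ H) : IsConj x y := by
  obtain ⟨w, hwA, hwB, hwC⟩ := not_cover hx1 hx2 hy1 hy3
  exact (same_diff hF hx1 hx2 hwA hwB).trans (same_diff hF hwA hwC hy1 hy3)

/-- Every element of the union of the conjugates of `H` that avoids at least one
conjugate is conjugate to the base element `a`. -/
lemma in_class {a g₀ : G} (ha : a ∈ H) (haK : a ∉ cj g₀ H) {x : G}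
    (hxS : ∃ g, x ∈ cj g H) (hxD : ∃ g, x ∉ cj g H) : IsConj a x := by
  obtain ⟨g₁, hx1⟩ := hxS
  obtain ⟨g₂, hx2⟩ := hxD
  have haH : a ∈ cj 1 H := mem_cj.2 (by simpa using ha)
  by_cases hxH : x ∈ cj 1 H
  · exact tri hF haH haK hxH hx2
  · obtain ⟨y, hy1, hy2⟩ := exists_diff ⟨x, hx1, hxH⟩
    exact (tri hF haH haK hy1 hy2).trans (link hF hy1 hy2 hx1 hxH)

omit hF

/-- The key lemma: all commutators of the normal closure lie in the normal core. -/
lemma key (hF' : ∀ x ∉ H, ∀ h ∈ H, IsConj x (x * h)) (hnn : ¬ H.Normal) :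
    ∀ x ∈ Subgroup.normalClosure (H : Set G), ∀ y ∈ Subgroup.normalClosure (H : Set G),
      x * y * x⁻¹ * y⁻¹ ∈ H.normalCore := by
  classical
  set N := Subgroup.normalClosure (H : Set G) with hNdef
  set D := H.normalCore with hDdef
  -- base pair: an element of H outside some conjugate
  have hex : ∃ a g₀, a ∈ H ∧ a ∉ cj g₀ H := by
    by_contra hc
    push_neg at hc
    refine hnn ⟨fun n hn g => ?_⟩
    have h := mem_cj.1 (hc n g⁻¹ hn)
    simpa using h
  obtain ⟨a, g₀, ha, haK⟩ := hex
  -- membership translations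
  have hSN : ∀ x : G, (∃ g, x ∈ cj g H) → x ∈ N := by
    rintro x ⟨g, hx⟩
    have h' : g⁻¹ * x * g ∈ N := Subgroup.subset_normalClosure (mem_cj.1 hx)
    have h2 := Subgroup.normalClosure_normal.conj_mem _ h' g
    have e : g * (g⁻¹ * x * g) * g⁻¹ = x := by group
    rwa [e] at h2

  let Sgrp : Subgroup G :=
    { carrier := {x | ∃ g, x ∈ cj g H}
      one_mem' := ⟨1, Subgroup.one_mem _⟩
      inv_mem' := by
        rintro x ⟨g, hx⟩
        exact ⟨g, Subgroup.inv_mem _ hx⟩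
      mul_mem' := by
        rintro x y ⟨gx, hx⟩ ⟨gy, hy⟩
        by_cases hxy : x ∈ cj gy H
        · exact ⟨gy, Subgroup.mul_mem _ hxy hy⟩
        · exact class_in_S ha
            ((in_class hF' ha haK ⟨gx, hx⟩ ⟨gy, hxy⟩).trans (F_cj hF' gy x hxy y hy)) }
  have hSnormal : Sgrp.Normal := by
    constructor
    rintro n ⟨g, hn⟩ u
    refine ⟨u * g, mem_cj.2 ?_⟩
    have e : (u * g)⁻¹ * (u * n * u⁻¹) * (u * g) = g⁻¹ * n * g := by group
    rw [e]
    exact mem_cj.1 hn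
  have hNS : ∀ x ∈ N, ∃ g, x ∈ cj g H := by
    haveI := hSnormal
    have hle : N ≤ Sgrp :=
      Subgroup.normalClosure_le_normal (fun x hx => ⟨1, mem_cj.2 (by simpa using hx)⟩)
    exact fun x hx => hle hx
  -- the normal core
  have hDmem : ∀ x : G, x ∈ D ↔ ∀ b : G, b * x * b⁻¹ ∈ H := fun x => Iff.rfl
  have hDcj : ∀ {x : G}, x ∉ D → ∃ g, x ∉ cj g H := by
    intro x hx
    by_contra h
    push_neg at h
    refine hx ((hDmem x).2 fun b => ?_)
    have := mem_cj.1 (h b⁻¹)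
    simpa using this
  have hDle : ∀ g : G, D ≤ cj g H := by
    intro g d hd
    refine mem_cj.2 ?_
    have := (hDmem d).1 hd g⁻¹
    simpa using this
  have haD : a ∉ D := fun h => haK (hDle g₀ h)
  have haN : a ∈ N := hSN a ⟨1, mem_cj.2 (by simpa using ha)⟩
  have hclass : ∀ x ∈ N, x ∉ D → IsConj a x := fun x hx hxD =>
    in_class hF' ha haK (hNS x hx) (hDcj hxD)
  haveI hDnormal : D.Normal := H.normalCore_normal
  have hDconj : ∀ (u w : G), u * w * u⁻¹ ∈ D ↔ w ∈ D := by
    intro u w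
    constructor
    · intro h
      have := hDnormal.conj_mem _ h u⁻¹
      have e : u⁻¹ * (u * w * u⁻¹) * u⁻¹⁻¹ = w := by group
      rwa [e] at this
    · intro h
      exact hDnormal.conj_mem _ h u
  -- the quotient N / D
  have hDN : D ≤ N := fun d hd => Subgroup.subset_normalClosure (H.normalCore_le hd)
  let D' : Subgroup N := D.subgroupOf N
  haveI hD'normal : D'.Normal := hDnormal.subgroupOf N
  let φ : N →* N ⧸ D' := QuotientGroup.mk' D'
  have hker : ∀ m : N, φ m = 1 ↔ (m : G) ∈ D := by
    intro m
    exact (QuotientGroup.eq_one_iff m).trans Subgroup.mem_subgroupOf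
  have hpow : ∀ m : N, (m : G) ∉ D → ∀ k : ℕ, (φ m) ^ k = 1 ↔ a ^ k ∈ D := by
    intro m hm k
    obtain ⟨u, hu⟩ := isConj_iff.1 (hclass m m.2 hm)
    rw [← map_pow, hker]
    have e : ((m ^ k : N) : G) = ((m : G)) ^ k := by
      push_cast
      ring_nf
    rw [e, ← hu, conj_pow, hDconj]
  -- all nontrivial elements of the quotient have the same order
  let n₀ : N := ⟨a, haN⟩
  set r := orderOf (φ n₀) with hrdef
  have hr : ∀ m : N, (m : G) ∉ D → orderOf (φ m) = r := by
    intro m hm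
    rw [orderOf_eq_orderOf_iff]
    intro k
    rw [hpow m hm k, hpow n₀ haD k]
  have hrne : r ≠ 1 := by
    intro h
    exact haD ((hker n₀).1 (orderOf_eq_one_iff.1 h))
  have hrpos : r ≠ 0 := by
    have : 0 < orderOf (φ n₀) := orderOf_pos (φ n₀)
    omega
  set p := r.minFac with hpdef
  have hp : p.Prime := Nat.minFac_prime hrne
  haveI : Fact p.Prime := ⟨hp⟩
  have hdvd : p ∣ r := r.minFac_dvd
  have hrp : r = p := by
    have hdvd2 : r / p ∣ r := Nat.div_dvd_of_dvd hdvd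
    have hne0 : r / p ≠ 0 := by
      intro h
      have h2 := Nat.div_div_self hdvd hrpos
      rw [h, Nat.div_zero] at h2
      exact hp.ne_zero h2.symm
    have hordy : orderOf ((φ n₀) ^ (r / p)) = p := by
      rw [orderOf_pow' _ hne0, ← hrdef, Nat.gcd_eq_right hdvd2, Nat.div_div_self hdvd hrpos]
    have hy1 : (φ n₀) ^ (r / p) ≠ 1 := by
      intro h
      rw [h, orderOf_one] at hordy
      exact hp.one_lt.ne' hordy.symm
    have hmap : (φ n₀) ^ (r / p) = φ (n₀ ^ (r / p)) := (map_pow φ n₀ _).symm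
    have hmD : ((n₀ ^ (r / p) : N) : G) ∉ D := by
      intro h
      exact hy1 (by rw [hmap]; exact (hker _).2 h)
    have := hr _ hmD
    rw [← hmap] at this
    rw [hordy] at this
    exact this.symm
  have hexp : ∀ x : N ⧸ D', x ^ p = 1 := by
    intro x
    by_cases hx1 : x = 1
    · simp [hx1]
    obtain ⟨m, rfl⟩ := QuotientGroup.mk'_surjective D' x
    have hmD : (m : G) ∉ D := fun h => hx1 ((hker m).2 h)
    have : orderOf ((QuotientGroup.mk' D') m) = p := by rw [← hrp]; exact hr m hmD
    rw [← this]
    exact pow_orderOf_eq_one _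
  have hPQ : IsPGroup p (N ⧸ D') := fun x => ⟨1, by simpa using hexp x⟩
  haveI : Nontrivial (N ⧸ D') :=
    nontrivial_of_ne (φ n₀) 1 (fun h => haD ((hker n₀).1 h))
  haveI hcenter := hPQ.center_nontrivial
  obtain ⟨z, hz⟩ := exists_ne (1 : Subgroup.center (N ⧸ D'))
  obtain ⟨m, hm⟩ := QuotientGroup.mk'_surjective D' (z : N ⧸ D')
  have hmD : (m : G) ∉ D := by
    intro h
    exact hz (Subtype.ext (by rw [← hm]; exact (hker m).2 h))
  have hcomm : ∀ t : N, (m : G) * t * (m : G)⁻¹ * (t : G)⁻¹ ∈ D := by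
    intro t
    have hcz := Subgroup.mem_center_iff.1 z.2 (φ t)
    have h1 : φ (m * t * m⁻¹ * t⁻¹) = 1 := by
      have : φ m = (z : N ⧸ D') := hm
      rw [map_mul, map_mul, map_mul, map_inv, map_inv, this, ← hcz]
      group
    have h2 := (hker _).1 h1
    simpa using h2
  -- conclusion
  intro x hx y hy
  by_cases hxD : x ∈ D
  · have h1 : y * x⁻¹ * y⁻¹ ∈ D := hDnormal.conj_mem _ (D.inv_mem hxD) y
    have h2 := D.mul_mem hxD h1
    have e : x * (y * x⁻¹ * y⁻¹) = x * y * x⁻¹ * y⁻¹ := by group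
    rwa [e] at h2
  · have hcm : IsConj (m : G) x := (hclass _ m.2 hmD).symm.trans (hclass x hx hxD)
    obtain ⟨u, hu⟩ := isConj_iff.1 hcm
    have ht' : u⁻¹ * y * u ∈ N := by
      have := Subgroup.normalClosure_normal.conj_mem _ hy u⁻¹
      have e : u⁻¹ * y * u⁻¹⁻¹ = u⁻¹ * y * u := by group
      rwa [e] at this
    have h0 := hcomm ⟨u⁻¹ * y * u, ht'⟩
    have h1 := hDnormal.conj_mem _ h0 u
    have e : u * ((m : G) * (u⁻¹ * y * u) * (m : G)⁻¹ * (u⁻¹ * y * u)⁻¹) * u⁻¹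
        = (u * (m : G) * u⁻¹) * y * (u * (m : G) * u⁻¹)⁻¹ * y⁻¹ := by group
    rw [e, hu] at h1
    exact h1

end CondFProofAux

/-- `H` is normal in `N` (as a subgroup of `N`), and the quotient `N / H` is
abelian, expressed by saying that every commutator of elements of `N`
lies in `H`. -/
theorem stmt_6 {G : Type*} [Group G] [Finite G] (H : Subgroup G)
    (hF : CondF H) (hnn : ¬ H.Normal)
    (N : Subgroup G) (hN : N = Subgroup.normalClosure (H : Set G)) :
    (H.subgroupOf N).Normal ∧
      ∀ x ∈ N, ∀ y ∈ N, x * y * x⁻¹ * y⁻¹ ∈ H := by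
  obtain ⟨h1, h2, hF'⟩ := hF
  subst hN
  have key' := CondFProofAux.key hF' hnn
  constructor
  · constructor
    intro n hn g
    rw [Subgroup.mem_subgroupOf] at hn ⊢
    have hc := key' (g : G) g.2 (n : G) n.2
    have hcH : (g : G) * (n : G) * (g : G)⁻¹ * (n : G)⁻¹ ∈ H := H.normalCore_le hc
    have hm := H.mul_mem hcH hn
    have e : (g : G) * (n : G) * (g : G)⁻¹ * (n : G)⁻¹ * (n : G)
        = (g : G) * (n : G) * (g : G)⁻¹ := by group
    rw [e] at hm
    simpa using hm
  · intro x hx y hy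
    exact H.normalCore_le (key' x hx y hy)
end

section
/- Let G be a finite group and H a subgroup with 1 < H < G such that the pair (G,H) satisfies condition (F*) and H is not normal in G. If M is a normal subgroup of G with H not contained in M, then M is a proper subgroup of H, and moreover the pair (G/M, H/M) satisfies condition (F*). -/
/-- The pair `(G, H)` satisfies condition (F*): `1 < H < G` and for every
`x ∈ G \ H` and every `h ∈ H`, the element `x * h` is conjugate in `G`
to `x` or to `x⁻¹`. -/
def CondFStar {G : Type*} [Group G] (H : Subgroup G) : Prop :=
  H ≠ ⊥ ∧ H ≠ ⊤ ∧ ∀ x ∉ H, ∀ h ∈ H, IsConj (x * h) x ∨ IsConj (x * h) x⁻¹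

theorem stmt_8 {G : Type*} [Group G] [Finite G] (H : Subgroup G)
    (hF : CondFStar H) (hnn : ¬ H.Normal)
    (M : Subgroup G) [M.Normal] (hM : ¬ H ≤ M) :
    M < H ∧ CondFStar (H.map (QuotientGroup.mk' M)) := by
  obtain ⟨hbot, htop, hconj⟩ := hF
  -- M ≤ H
  have hMH : M ≤ H := by
    intro m hm
    by_contra hmH
    apply hM
    intro h hh
    have := hconj m hmH h hh
    have hmemM : m * h ∈ M := by
      rcases this with hc | hc
      · obtain ⟨c, hc⟩ := isConj_iff.mp hc.symm
        rw [← hc]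
        exact Subgroup.Normal.conj_mem ‹M.Normal› m hm c
      · obtain ⟨c, hc⟩ := isConj_iff.mp hc.symm
        rw [← hc]
        exact Subgroup.Normal.conj_mem ‹M.Normal› m⁻¹ (inv_mem hm) c
    have : h ∈ M := by
      have := mul_mem (inv_mem hm) hmemM
      simpa [mul_assoc] using this
    exact this
  have hMne : M ≠ H := by
    rintro rfl
    exact hnn ‹M.Normal›
  refine ⟨lt_of_le_of_ne hMH hMne, ?_, ?_, ?_⟩
  · rw [Ne, Subgroup.map_eq_bot_iff, QuotientGroup.ker_mk']
    exact hM
  · intro htopq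
    apply htop
    have : (H.map (QuotientGroup.mk' M)).comap (QuotientGroup.mk' M) = ⊤ := by
      rw [htopq]; exact Subgroup.comap_top _
    rw [Subgroup.comap_map_eq, QuotientGroup.ker_mk', sup_of_le_left hMH] at this
    exact this
  · intro x hx h hh
    obtain ⟨h0, hh0, rfl⟩ := hh
    obtain ⟨x0, rfl⟩ := QuotientGroup.mk'_surjective M x
    have hx0 : x0 ∉ H := fun hx0 => hx ⟨x0, hx0, rfl⟩
    rcases hconj x0 hx0 h0 hh0 with hc | hc
    · left
      simpa [map_mul] using (QuotientGroup.mk' M).map_isConj hc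
    · right
      simpa [map_mul, map_inv] using (QuotientGroup.mk' M).map_isConj hc
end

section
/- Let G be a finite group and H a subgroup with 1 < H < G such that the pair (G,H) satisfies condition (F*) and H is not normal in G. Then the center Z(G) is a proper subgroup of H and H is a proper subgroup of the derived subgroup G' of G. -/
private lemma isConj_central {G : Type*} [Group G] {a b : G}
    (hb : b ∈ Subgroup.center G) (h : IsConj a b) : a = b := by
  obtain ⟨c, hc⟩ := h.symm
  -- hc.eq : ↑c * b = a * ↑c
  have hb' : (c : G) * b = b * (c : G) := Subgroup.mem_center_iff.mp hb c
  exact mul_right_cancel (hc.eq.symm.trans hb')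

theorem stmt_9 {G : Type*} [Group G] [Finite G] (H : Subgroup G)
    (hF : CondFStar H) (hnn : ¬ H.Normal) :
    Subgroup.center G < H ∧ H < commutator G := by
  obtain ⟨-, htop, hFs⟩ := hF
  -- center ≤ H
  have hZH : Subgroup.center G ≤ H := by
    intro z hz
    by_contra hzH
    apply hnn
    -- every element of H is central, hence H is normal
    have hle : H ≤ Subgroup.center G := by
      intro h hh
      rcases hFs z hzH h hh with hc | hc
      · have h1 : z * h = z := isConj_central hz hc
        have : h = 1 := by
          have := mul_left_cancel (a := z) (by simpa using h1)
          simpa using this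
        rw [this]; exact Subgroup.one_mem _
      · have hz' : z⁻¹ ∈ Subgroup.center G := inv_mem hz
        have heq : z * h = z⁻¹ := isConj_central hz' hc
        have h2 : h = z⁻¹ * (z * h) := by group
        rw [heq] at h2
        rw [h2]; exact mul_mem hz' hz'
    constructor
    intro n hn g
    have hcomm := Subgroup.mem_center_iff.mp (hle hn) g
    simpa [hcomm, mul_assoc] using hn
  have hZne : Subgroup.center G ≠ H := by
    rintro rfl
    exact hnn inferInstance
  refine ⟨lt_of_le_of_ne hZH hZne, ?_⟩
  -- H ≤ commutator
  set π : G →* Abelianization G := Abelianization.of with hπ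
  have mapConj : ∀ {a b : G}, IsConj a b → π a = π b := by
    intro a b hab
    obtain ⟨c, hc⟩ := hab
    have := congrArg π hc.eq
    simp only [map_mul] at this
    -- this : π c * π a = π b * π c
    rw [mul_comm (π b) (π c)] at this
    exact mul_left_cancel this
  have hHC : H ≤ commutator G := by
    intro h hh
    rw [← QuotientGroup.eq_one_iff h]
    show π h = 1
    by_contra hne
    -- step A : for x ∉ H, π x * π h = (π x)⁻¹
    have stepA : ∀ x ∉ H, π x * π h = (π x)⁻¹ := by
      intro x hx
      rcases hFs x hx h hh with hc | hc
      · exfalso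
        have := mapConj hc
        rw [map_mul] at this
        exact hne (by simpa using mul_left_cancel (a := π x) (by simpa using this))
      · have := mapConj hc
        rw [map_mul, map_inv] at this
        exact this
    obtain ⟨x, hx⟩ : ∃ x, x ∉ H := by
      by_contra hc
      push_neg at hc
      exact htop ((Subgroup.eq_top_iff' H).mpr hc)
    -- step B : squares of H-elements die in the abelianization
    have stepB : ∀ h' ∈ H, π h' * π h' = 1 := by
      intro h' hh'
      have hxh' : x * h' ∉ H := fun hmem => hx (by simpa using mul_mem hmem (inv_mem hh'))
      have h1 := stepA x hx
      have h2 := stepA (x * h') hxh'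
      simp only [map_mul, mul_inv_rev] at h2
      -- h2 : π x * π h' * π h = (π h')⁻¹ * (π x)⁻¹
      rw [mul_right_comm, h1, mul_comm] at h2
      -- h2 : π h' * (π x)⁻¹ = (π h')⁻¹ * (π x)⁻¹
      have h3 := mul_right_cancel h2
      calc π h' * π h' = π h' * (π h')⁻¹ := by rw [← h3]
        _ = 1 := mul_inv_cancel _
    have hinv : (π h)⁻¹ = π h := inv_eq_of_mul_eq_one_right (stepB h hh)
    -- step C : (π y)² = π h for y ∉ H
    have stepC : ∀ y ∉ H, π y * π y = π h := by
      intro y hy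
      have h1 := stepA y hy
      have hA : π h = (π y)⁻¹ * (π y)⁻¹ := by
        have : π h = (π y)⁻¹ * (π y * π h) := by group
        rw [h1] at this; exact this
      calc π y * π y = (π h)⁻¹ := by rw [hA, mul_inv_rev, inv_inv]
        _ = π h := hinv
    -- step D : product of two non-members lies in H
    have stepD : ∀ a b : G, a ∉ H → b ∉ H → a * b ∈ H := by
      intro a b ha hb
      by_contra hab
      have h1 := stepC a ha
      have h2 := stepC b hb
      have h3 := stepC (a * b) hab
      simp only [map_mul] at h3
      have hsq : π h = π h * π h := by
        calc π h = π a * π b * (π a * π b) := h3.symm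
          _ = (π a * π a) * (π b * π b) := by
              rw [mul_assoc, mul_assoc, mul_comm (π b) (π a * π b), mul_assoc]
          _ = π h * π h := by rw [h1, h2]
      exact hne (left_eq_mul.mp hsq)
    -- hence H has index 2 and is normal: contradiction
    apply hnn
    constructor
    intro n hn g
    by_cases hg : g ∈ H
    · exact mul_mem (mul_mem hg hn) (inv_mem hg)
    · have hgn : g * n ∉ H := fun hmem => hg (by simpa using mul_mem hmem (inv_mem hn))
      have hginv : g⁻¹ ∉ H := fun hmem => hg (by simpa using inv_mem hmem)
      exact stepD (g * n) g⁻¹ hgn hginv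
  have hHCne : H ≠ commutator G := by
    rintro rfl
    exact hnn (Subgroup.commutator_normal ⊤ ⊤)
  exact lt_of_le_of_ne hHC hHCne
end

section
/- Let G be a finite group and H a subgroup with 1 < H < G such that the pair (G,H) satisfies condition (F*) and H is not normal in G. Let x ∈ G be an element lying in no conjugate of H, let K = x^G be its conjugacy class, and let N be the normal closure of H in G. Then K·N ⊆ K ∪ K⁻¹, where K⁻¹ = { k⁻¹ : k ∈ K }. -/
private lemma isConj_inv_inv {G : Type*} [Group G] {a b : G} (h : IsConj a b) :
    IsConj a⁻¹ b⁻¹ := by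
  obtain ⟨c, hc⟩ := isConj_iff.1 h
  exact isConj_iff.2 ⟨c, by rw [← hc]; group⟩

theorem stmt_10 {G : Type*} [Group G] [Finite G] (H : Subgroup G)
    (hF : CondFStar H) (hnn : ¬ H.Normal)
    (x : G) (hx : ∀ g : G, g * x * g⁻¹ ∉ H)
    (K : Set G) (hK : K = {y : G | IsConj x y})
    (N : Subgroup G) (hN : N = Subgroup.normalClosure (H : Set G)) :
    ∀ k ∈ K, ∀ n ∈ N, k * n ∈ K ∪ K⁻¹ := by
  -- define the target set via a predicate
  set P : G → Prop := fun y => IsConj x y ∨ IsConj x⁻¹ y with hP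
  -- core lemma: multiplying an element of P by a conjugate of an element of H stays in P
  have core : ∀ y, P y → ∀ s ∈ Group.conjugatesOfSet (H : Set G), P (y * s) := by
    intro y hy s hs
    obtain ⟨h, hh, hconj⟩ := Group.mem_conjugatesOfSet_iff.1 hs
    obtain ⟨c, hc⟩ := isConj_iff.1 hconj
    set z := c⁻¹ * y * c with hz
    have hzP : P z := by
      rcases hy with hy | hy
      · exact Or.inl (hy.trans (isConj_iff.2 ⟨c⁻¹, by rw [hz]; group⟩))
      · exact Or.inr (hy.trans (isConj_iff.2 ⟨c⁻¹, by rw [hz]; group⟩))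
    have hzH : z ∉ H := by
      intro hmem
      rcases hzP with hzc | hzc
      · obtain ⟨g, hg⟩ := isConj_iff.1 hzc
        exact hx g (hg ▸ hmem)
      · obtain ⟨g, hg⟩ := isConj_iff.1 hzc
        have : (g * x⁻¹ * g⁻¹)⁻¹ ∈ H := hg ▸ (inv_mem hmem)
        have h2 : g * x * g⁻¹ ∈ H := by
          convert this using 1; group
        exact hx g h2
    have hF' := hF.2.2 z hzH h hh
    have key : IsConj (z * h) (y * s) := isConj_iff.2 ⟨c, by rw [← hc, hz]; group⟩
    rcases hF' with h1 | h1
    · rcases hzP with hzc | hzc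
      · exact Or.inl (hzc.trans ((key.symm.trans h1).symm))
      · exact Or.inr (hzc.trans ((key.symm.trans h1).symm))
    · have h2 : IsConj z⁻¹ (y * s) := (key.symm.trans h1).symm
      rcases hzP with hzc | hzc
      · exact Or.inr ((isConj_inv_inv hzc).trans h2)
      · have : IsConj x z⁻¹ := by
          have := isConj_inv_inv hzc; rwa [inv_inv] at this
        exact Or.inl (this.trans h2)
  -- strengthen: Q n := (∀ y, P y → P (y*n)) ∧ (∀ y, P y → P (y*n⁻¹))
  intro k hk n hn
  rw [hN] at hn
  have main : ∀ n ∈ Subgroup.normalClosure (H : Set G),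
      (∀ y, P y → P (y * n)) ∧ (∀ y, P y → P (y * n⁻¹)) := by
    intro n hn
    refine Subgroup.closure_induction
      (p := fun n _ => (∀ y, P y → P (y * n)) ∧ (∀ y, P y → P (y * n⁻¹))) ?_ ?_ ?_ ?_ hn
    · intro s hs
      refine ⟨fun y hy => core y hy s hs, fun y hy => ?_⟩
      obtain ⟨h, hh, hconj⟩ := Group.mem_conjugatesOfSet_iff.1 hs
      have : s⁻¹ ∈ Group.conjugatesOfSet (H : Set G) :=
        Group.mem_conjugatesOfSet_iff.2 ⟨h⁻¹, inv_mem hh, isConj_inv_inv hconj⟩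
      exact core y hy s⁻¹ this
    · constructor <;> · intro y hy; simpa using hy
    · intro a b _ _ ⟨ha, ha'⟩ ⟨hb, hb'⟩
      constructor
      · intro y hy
        rw [← mul_assoc]; exact hb _ (ha _ hy)
      · intro y hy
        rw [mul_inv_rev, ← mul_assoc]; exact ha' _ (hb' _ hy)
    · intro a _ ⟨ha, ha'⟩
      exact ⟨ha', by simpa using ha⟩
  have hkP : P k := Or.inl (by rw [hK] at hk; exact hk)
  have : P (k * n) := (main n hn).1 k hkP
  rcases this with h1 | h1
  · exact Or.inl (hK ▸ h1)
  · right
    rw [Set.mem_inv, hK]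
    have := isConj_inv_inv h1
    rwa [inv_inv] at this
end

section
/- Let G be a finite group and H a subgroup with 1 < H < G such that the pair (G,H) satisfies condition (F*) and H is not normal in G. Let N be the normal closure of H in G. Then N equals the union of all conjugates H^g of H over g ∈ G. -/
theorem stmt_11 {G : Type*} [Group G] [Finite G] (H : Subgroup G)
    (hF : CondFStar H) (hnn : ¬ H.Normal)
    (N : Subgroup G) (hN : N = Subgroup.normalClosure (H : Set G)) :
    (N : Set G) = ⋃ g : G, (fun x => g⁻¹ * x * g) '' (H : Set G) := by
  subst hN
  set U : Set G := ⋃ g : G, (fun x => g⁻¹ * x * g) '' (H : Set G) with hU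
  have hmemU : ∀ g h : G, h ∈ H → g⁻¹ * h * g ∈ U := by
    intro g h hh
    exact Set.mem_iUnion.2 ⟨g, ⟨h, hh, rfl⟩⟩
  have hconjU : ∀ x ∈ U, ∀ c : G, c⁻¹ * x * c ∈ U := by
    intro x hx c
    obtain ⟨g, h, hh, rfl⟩ := Set.mem_iUnion.1 hx
    have e : c⁻¹ * (g⁻¹ * h * g) * c = (g * c)⁻¹ * h * (g * c) := by group
    rw [e]; exact hmemU _ _ hh
  have hinvU : ∀ x ∈ U, x⁻¹ ∈ U := by
    intro x hx
    obtain ⟨g, h, hh, rfl⟩ := Set.mem_iUnion.1 hx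
    have e : (g⁻¹ * h * g)⁻¹ = g⁻¹ * h⁻¹ * g := by group
    rw [e]; exact hmemU _ _ (inv_mem hh)
  have key : ∀ x ∈ U, ∀ h ∈ H, x * h ∈ U := by
    intro x hx h hh
    by_cases hxH : x ∈ H
    · have hm : x * h ∈ H := mul_mem hxH hh
      have := hmemU 1 (x * h) hm
      simpa using this
    · rcases hF.2.2 x hxH h hh with hc | hc
      · obtain ⟨c, hc⟩ := isConj_iff.1 hc
        have e : x * h = c⁻¹ * x * c := by
          conv_rhs => rw [← hc]
          group
        rw [e]; exact hconjU x hx c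
      · obtain ⟨c, hc⟩ := isConj_iff.1 hc
        have e : x * h = c⁻¹ * x⁻¹ * c := by
          have hc' : x * h = c⁻¹ * x⁻¹ * c := by
            have := congrArg (fun y => c⁻¹ * y * c) hc
            simpa [mul_assoc] using this
          exact hc'
        rw [e]; exact hconjU x⁻¹ (hinvU x hx) c
  have hmulU : ∀ a ∈ U, ∀ b ∈ U, a * b ∈ U := by
    intro a ha b hb
    obtain ⟨k, h, hh, rfl⟩ := Set.mem_iUnion.1 hb
    have e : a * (k⁻¹ * h * k) = k⁻¹ * (((k⁻¹)⁻¹ * a * k⁻¹) * h) * k := by group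
    rw [e]
    exact hconjU _ (key _ (hconjU a ha k⁻¹) h hh) k
  let US : Subgroup G :=
    { carrier := U
      one_mem' := by simpa using hmemU 1 1 (one_mem H)
      mul_mem' := fun {a b} ha hb => hmulU a ha b hb
      inv_mem' := fun {a} ha => hinvU a ha }
  have hUSnormal : US.Normal := by
    constructor
    intro n hn g
    have := hconjU n hn g⁻¹
    exact (by simpa using this : g * n * g⁻¹ ∈ U)
  have hHsub : (H : Set G) ⊆ US := by
    intro x hx
    have := hmemU 1 x hx
    exact (by simpa using this : x ∈ U)
  apply Set.Subset.antisymm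
  · intro x hx
    exact Subgroup.normalClosure_le_normal hHsub hx
  · intro x hx
    obtain ⟨g, h, hh, rfl⟩ := Set.mem_iUnion.1 hx
    have hhN : h ∈ Subgroup.normalClosure (H : Set G) :=
      Subgroup.subset_normalClosure hh
    have := (Subgroup.normalClosure_normal (s := (H : Set G))).conj_mem h hhN g⁻¹
    simpa using this
end

section
/- Let p be a prime and let G be a finite p-group with a subgroup H satisfying 1 < H < G. If the pair (G,H) satisfies condition (F*), then H is a normal subgroup of G. -/
private theorem key_aux : ∀ (n : ℕ) (G : Type u) [Group G] [Finite G] (p : ℕ),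
    Nat.card G ≤ n → p.Prime → IsPGroup p G →
    ∀ H : Subgroup G, CondFStar H → H.Normal := by
  intro n
  induction n with
  | zero =>
    intro G _ _ p hcard _ _ _ _
    have : 0 < Nat.card G := Nat.card_pos
    omega
  | succ n ih =>
    intro G _ _ p hcard hp hG H hF
    obtain ⟨hbot, htop, hconj⟩ := hF
    by_cases hHZ : H ≤ Subgroup.center G
    · -- H ≤ Z(G) : H is normal
      refine ⟨fun {a} ha g => ?_⟩
      have hc : ∀ m : G, m * a = a * m := Subgroup.mem_center_iff.mp (hHZ ha)
      have : g * a * g⁻¹ = a := by rw [hc g]; group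
      rwa [this]
    by_cases hZH : Subgroup.center G ≤ H
    · -- pass to the quotient G / Z(G)
      have hGnt : Nontrivial G := by
        by_contra hnt
        have : Subsingleton G := not_nontrivial_iff_subsingleton.mp hnt
        exact hbot (Subsingleton.elim _ _)
      haveI : Fact p.Prime := ⟨hp⟩
      have hZnt : Nontrivial (Subgroup.center G) := hG.center_nontrivial
      set Z := Subgroup.center G
      let f : G →* G ⧸ Z := QuotientGroup.mk' Z
      have hfsurj : Function.Surjective f := QuotientGroup.mk'_surjective Z
      have hker : f.ker = Z := QuotientGroup.ker_mk' Z
      have hcardlt : Nat.card (G ⧸ Z) ≤ n := by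
        have h1 : Nat.card G = Nat.card (G ⧸ Z) * Nat.card Z :=
          Subgroup.card_eq_card_quotient_mul_card_subgroup Z
        have h2 : 2 ≤ Nat.card Z := Finite.one_lt_card
        have h3 : 0 < Nat.card (G ⧸ Z) := Nat.card_pos
        have h4 : 2 * Nat.card (G ⧸ Z) ≤ Nat.card G := by
          rw [h1, mul_comm]
          exact Nat.mul_le_mul_left _ h2
        omega
      have hcomap : (Subgroup.map f H).comap f = H := by
        rw [Subgroup.comap_map_eq, hker, sup_of_le_left hZH]
      have hF' : CondFStar (Subgroup.map f H) := by
        refine ⟨?_, ?_, ?_⟩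
        · intro hb
          rw [Subgroup.map_eq_bot_iff, hker] at hb
          exact hHZ hb
        · intro ht
          have : (Subgroup.map f H).comap f = (⊤ : Subgroup (G ⧸ Z)).comap f := by rw [ht]
          rw [hcomap, Subgroup.comap_top] at this
          exact htop this
        · intro xb hxb hb hhb
          obtain ⟨x, rfl⟩ := hfsurj xb
          obtain ⟨h, hh, rfl⟩ := hhb
          have hx : x ∉ H := fun hx => hxb (Subgroup.mem_map_of_mem f hx)
          rcases hconj x hx h hh with h1 | h1
          · left
            have := f.map_isConj h1
            simpa using this
          · right
            have := f.map_isConj h1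
            simpa using this
      have hnorm : (Subgroup.map f H).Normal :=
        ih (G ⧸ Z) p hcardlt hp (hG.to_quotient Z) (Subgroup.map f H) hF'
      have := hnorm.comap f
      rwa [hcomap] at this
    · -- there is a central element outside H; then H ≤ Z(G), contradiction
      exfalso
      apply hHZ
      rw [SetLike.le_def] at hZH
      push_neg at hZH
      rcases hZH with ⟨x, hxZ, hxH⟩
      have hxc : ∀ m : G, m * x = x * m := Subgroup.mem_center_iff.mp hxZ
      have hzZ : x⁻¹ * x⁻¹ ∈ Subgroup.center G :=
        mul_mem (inv_mem hxZ) (inv_mem hxZ)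
      have hzc : ∀ m : G, m * (x⁻¹ * x⁻¹) = (x⁻¹ * x⁻¹) * m :=
        Subgroup.mem_center_iff.mp hzZ
      intro h hh
      rcases hconj x hxH h hh with h1 | h1 <;>
        rcases isConj_iff.mp h1 with ⟨g, hg⟩ <;>
        rw [show g * (x * h) * g⁻¹ = g * x * (h * g⁻¹) by group, hxc g,
          show x * g * (h * g⁻¹) = x * (g * h * g⁻¹) by group] at hg
      · -- x * (g h g⁻¹) = x, so h = 1
        have h1' : g * h * g⁻¹ = 1 := mul_left_cancel (a := x) (by rw [hg, mul_one])
        have : h = 1 := by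
          have := congrArg (fun y => g⁻¹ * y * g) h1'
          simpa [mul_assoc] using this
        rw [this]; exact Subgroup.one_mem _
      · -- x * (g h g⁻¹) = x⁻¹, so h = x⁻² which is central
        have h1' : g * h * g⁻¹ = x⁻¹ * x⁻¹ :=
          mul_left_cancel (a := x) (by rw [hg]; group)
        have hhz : h = g⁻¹ * (x⁻¹ * x⁻¹) * g := by
          have := congrArg (fun y => g⁻¹ * y * g) h1'
          simpa [mul_assoc] using this
        have : h = x⁻¹ * x⁻¹ := by
          rw [hhz, mul_assoc, ← hzc g, ← mul_assoc, inv_mul_cancel, one_mul]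
        rw [this]; exact hzZ

theorem stmt_13 {G : Type*} [Group G] [Finite G] (p : ℕ) (hp : p.Prime)
    (hG : IsPGroup p G) (H : Subgroup G) (hF : CondFStar H) :
    H.Normal :=
  key_aux (Nat.card G) G p le_rfl hp hG H hF
end

section
/- Let G be a finite group, H a proper subgroup of G, and p a prime. Let K be the subgroup of H generated by all elements of H whose order is not divisible by p. Then every element of G \ H has order divisible by p if and only if K is a normal subgroup of G and the quotient G/K is a p-group. Moreover, if these equivalent conditions hold, then H is subnormal in G and every element of G \ K has order divisible by p. -/
/-- A subgroup `H` of `G` is subnormal if there is a chain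
`H = c 0 ⊴ c 1 ⊴ ⋯ ⊴ c n = G` in which each term is normal in the next. -/
def Subgroup.IsSubnormalIn {G : Type*} [Group G] (H : Subgroup G) : Prop :=
  ∃ (n : ℕ) (c : Fin (n + 1) → Subgroup G),
    c 0 = H ∧ c (Fin.last n) = ⊤ ∧
    (∀ i : Fin n, c i.castSucc ≤ c i.succ) ∧
    ∀ i : Fin n, ((c i.castSucc).subgroupOf (c i.succ)).Normal

theorem stmt_14 {G : Type*} [Group G] [Finite G] (H : Subgroup G)
    (hH : H ≠ ⊤) (p : ℕ) (hp : p.Prime)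
    (K : Subgroup G)
    (hK : K = Subgroup.closure {x : G | x ∈ H ∧ ¬ p ∣ orderOf x}) :
    ((∀ x : G, x ∉ H → p ∣ orderOf x) ↔
        (K.Normal ∧ ∃ n : ℕ, K.index = p ^ n)) ∧
      ((∀ x : G, x ∉ H → p ∣ orderOf x) →
        (H.IsSubnormalIn ∧ ∀ x : G, x ∉ K → p ∣ orderOf x)) := by
  haveI : Fact p.Prime := ⟨hp⟩
  have hKH : K ≤ H := by
    rw [hK]; exact Subgroup.closure_le H |>.2 fun x hx => hx.1
  -- elements of order not divisible by p lie in K, under the hypothesis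
  have hmemK : (∀ x : G, x ∉ H → p ∣ orderOf x) →
      ∀ x : G, ¬ p ∣ orderOf x → x ∈ K := by
    intro h x hx
    have hxH : x ∈ H := by by_contra hc; exact hx (h x hc)
    rw [hK]; exact Subgroup.subset_closure ⟨hxH, hx⟩
  have hconj : ∀ (g x : G), orderOf (g * x * g⁻¹) = orderOf x := by
    intro g x
    refine (SemiconjBy.orderOf_eq g ?_).symm
    show g * x = (g * x * g⁻¹) * g
    group
  -- forward: the hypothesis implies K normal
  have hnormal : (∀ x : G, x ∉ H → p ∣ orderOf x) → K.Normal := by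
    intro h
    constructor
    intro n hn g
    rw [hK] at hn ⊢
    induction hn using Subgroup.closure_induction with
    | mem x hx =>
      apply Subgroup.subset_closure
      refine ⟨?_, ?_⟩
      · by_contra hc
        have := h _ hc
        rw [hconj] at this
        exact hx.2 this
      · rw [hconj]; exact hx.2
    | one => simpa using Subgroup.one_mem _
    | mul x y hx hy ihx ihy =>
      have hxy : g * (x * y) * g⁻¹ = (g * x * g⁻¹) * (g * y * g⁻¹) := by group
      rw [hxy]; exact Subgroup.mul_mem _ ihx ihy
    | inv x hx ihx =>
      have hxi : g * x⁻¹ * g⁻¹ = (g * x * g⁻¹)⁻¹ := by group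
      rw [hxi]; exact Subgroup.inv_mem _ ihx
  -- forward: quotient is a p-group
  have hpgroup : (∀ x : G, x ∉ H → p ∣ orderOf x) → ∀ (_ : K.Normal),
      IsPGroup p (G ⧸ K) := by
    intro h hN
    intro q
    obtain ⟨g, rfl⟩ := QuotientGroup.mk_surjective q
    refine ⟨(orderOf g).factorization p, ?_⟩
    have hgpos : orderOf g ≠ 0 := (orderOf_pos g).ne'
    have hdvd : p ^ (orderOf g).factorization p ∣ orderOf g := Nat.ordProj_dvd _ _
    have hord : orderOf (g ^ p ^ (orderOf g).factorization p) =
        ordCompl[p] (orderOf g) := by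
      rw [orderOf_pow, Nat.gcd_eq_right hdvd]
    have hmem : g ^ p ^ (orderOf g).factorization p ∈ K := by
      apply hmemK h
      rw [hord]
      exact Nat.not_dvd_ordCompl hp hgpos
    show QuotientGroup.mk g ^ p ^ (orderOf g).factorization p = 1
    rw [← QuotientGroup.mk_pow]
    exact (QuotientGroup.eq_one_iff _).2 hmem
  refine ⟨⟨?_, ?_⟩, ?_⟩
  · intro h
    have hN := hnormal h
    refine ⟨hN, ?_⟩
    haveI := hN
    have := (hpgroup h hN).exists_card_eq
    simpa [Subgroup.index] using this
  · rintro ⟨hN, n, hidx⟩ x hxH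
    haveI := hN
    by_contra hc
    have h1 : orderOf (QuotientGroup.mk (s := K) x) ∣ orderOf x :=
      orderOf_map_dvd (QuotientGroup.mk' K) x
    have h2 : orderOf (QuotientGroup.mk (s := K) x) ∣ p ^ n := by
      rw [← hidx]; exact orderOf_dvd_natCard _
    have hcop : Nat.Coprime (orderOf x) (p ^ n) :=
      Nat.Coprime.pow_right _ ((hp.coprime_iff_not_dvd.mpr hc).symm)
    have hone : orderOf (QuotientGroup.mk (s := K) x) = 1 :=
      Nat.dvd_one.mp (hcop ▸ Nat.dvd_gcd h1 h2)
    have : x ∈ K := (QuotientGroup.eq_one_iff x).mp (orderOf_eq_one_iff.mp hone)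
    exact hxH (hKH this)
  · intro h
    have hN := hnormal h
    haveI := hN
    have hpg := hpgroup h hN
    constructor
    · -- subnormality
      haveI : Group.IsNilpotent (G ⧸ K) := hpg.isNilpotent
      have ncond : NormalizerCondition (G ⧸ K) := normalizerCondition_of_isNilpotent
      have hsurj : Function.Surjective (QuotientGroup.mk' K) :=
        QuotientGroup.mk'_surjective K
      -- key step: subgroups containing K grow strictly inside their normalizers
      have key : ∀ L : Subgroup G, K ≤ L → L ≠ ⊤ → L < Subgroup.normalizer (L : Set G) := by
        intro L hKL hL
        have hker : (QuotientGroup.mk' K).ker ≤ L := by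
          rw [QuotientGroup.ker_mk']; exact hKL
        have hcm : (L.map (QuotientGroup.mk' K)).comap (QuotientGroup.mk' K) = L :=
          Subgroup.comap_map_eq_self hker
        have hlt : L.map (QuotientGroup.mk' K) < ⊤ := by
          rw [lt_top_iff_ne_top]
          intro hc
          apply hL
          rw [← hcm, hc, Subgroup.comap_top]
        have h2 := ncond _ hlt
        have h3 : L < (Subgroup.normalizer ((L.map (QuotientGroup.mk' K) : Subgroup (G ⧸ K)) : Set (G ⧸ K))).comap
            (QuotientGroup.mk' K) := by
          refine lt_of_le_of_ne
            (le_trans (Subgroup.le_comap_map _ L) (Subgroup.comap_mono h2.le)) ?_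
          intro heq
          apply h2.ne
          have := congrArg (Subgroup.map (QuotientGroup.mk' K)) heq
          rwa [Subgroup.map_comap_eq_self_of_surjective hsurj] at this
        refine lt_of_lt_of_le h3 ?_
        calc (Subgroup.normalizer ((L.map (QuotientGroup.mk' K) : Subgroup (G ⧸ K)) : Set (G ⧸ K))).comap (QuotientGroup.mk' K)
            ≤ Subgroup.normalizer (((L.map (QuotientGroup.mk' K)).comap (QuotientGroup.mk' K) : Subgroup G) : Set G) :=
              Subgroup.le_normalizer_comap _
          _ = Subgroup.normalizer (L : Set G) := by rw [hcm]
      -- iterated normalizers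
      let f : ℕ → Subgroup G := fun n => (fun S : Subgroup G => Subgroup.normalizer (S : Set G))^[n] H
      have hf0 : f 0 = H := rfl
      have hfs : ∀ n, f (n + 1) = Subgroup.normalizer (f n : Set G) := fun n =>
        Function.iterate_succ_apply' _ _ _
      have hfK : ∀ n, K ≤ f n := by
        intro n
        induction n with
        | zero => exact hKH
        | succ n ih => rw [hfs]; exact le_trans ih (Subgroup.le_normalizer)
      have htop : ∃ n, f n = ⊤ := by
        by_contra hc
        push_neg at hc
        have hsm : StrictMono f := by
          apply strictMono_nat_of_lt_succ
          intro n
          rw [hfs]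
          exact key (f n) (hfK n) (hc n)
        obtain ⟨a, b, hab, heq⟩ := Finite.exists_ne_map_eq_of_infinite f
        exact hab (hsm.injective heq)
      obtain ⟨n, hn⟩ := htop
      refine ⟨n, fun i => f i, by simp [hf0], by simpa using hn, ?_, ?_⟩
      · intro i
        show f i.castSucc ≤ f i.succ
        rw [Fin.coe_castSucc, Fin.val_succ, hfs]
        exact Subgroup.le_normalizer
      · intro i
        show ((f i.castSucc).subgroupOf (f i.succ)).Normal
        rw [Fin.coe_castSucc, Fin.val_succ, hfs]
        exact Subgroup.normal_in_normalizer
    · intro x hxK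
      by_contra hc
      exact hxK (hmemK h x hc)
end

section
/- Let G be a finite group and H a proper subgroup of G such that the pair (G,H) satisfies condition (O). Let K be the subgroup of H generated by all elements of H of odd order. Then the pair (G,K) also satisfies condition (O). -/
/-- The pair `(G, H)` satisfies condition (O): `H < G` and for every element
`x ∈ G \ H` of odd order, every element of the coset `x * H` has odd order. -/
def CondO {G : Type*} [Group G] (H : Subgroup G) : Prop :=
  H ≠ ⊤ ∧ ∀ x ∉ H, Odd (orderOf x) → ∀ h ∈ H, Odd (orderOf (x * h))

theorem stmt_15 {G : Type*} [Group G] [Finite G] (H : Subgroup G)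
    (hO : CondO H)
    (K : Subgroup G)
    (hK : K = Subgroup.closure {x : G | x ∈ H ∧ Odd (orderOf x)}) :
    CondO K := by
  obtain ⟨hne, hodd⟩ := hO
  have hKH : K ≤ H := by
    rw [hK]
    exact Subgroup.closure_le H |>.mpr (fun y hy => hy.1)
  constructor
  · intro htop
    exact hne (top_le_iff.mp (htop ▸ hKH))
  · intro x hx hxodd h hh
    by_cases hxH : x ∈ H
    · exact absurd (hK ▸ Subgroup.subset_closure ⟨hxH, hxodd⟩) hx
    · exact hodd x hxH hxodd h (hKH hh)
end

section
/- Let G be a finite group, p a prime, and x ∈ G a p-element (an element whose order is a power of p). Suppose that for every nontrivial element y ∈ G whose order is not divisible by p, the product xy has order not divisible by p. Then x lies in O_p(G); equivalently, there exists a normal subgroup P of G such that P is a p-group and x ∈ P. -/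
theorem stmt_19 {G : Type*} [Group G] [Finite G] (p : ℕ) (hp : p.Prime)
    (x : G) (hx : ∃ n : ℕ, orderOf x = p ^ n)
    (hreg : ∀ y : G, y ≠ 1 → ¬ p ∣ orderOf y → ¬ p ∣ orderOf (x * y)) :
    ∃ P : Subgroup G, P.Normal ∧ IsPGroup p P ∧ x ∈ P := by
  classical
  -- the key property: multiplying a nontrivial p-regular element on the left
  -- by an element of the normal closure of x gives a nontrivial p-regular element
  have key : ∀ n ∈ Subgroup.normalClosure {x}, ∀ y : G, y ≠ 1 → ¬ p ∣ orderOf y →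
      (n * y ≠ 1 ∧ ¬ p ∣ orderOf (n * y)) := by
    intro n hn
    have hn' : n ∈ Subgroup.closure (Group.conjugatesOfSet {x}) := hn
    clear hn
    induction hn' using Subgroup.closure_induction with
    | mem s hs =>
      obtain ⟨a, ha, hconj⟩ := Group.mem_conjugatesOfSet_iff.mp hs
      rw [Set.mem_singleton_iff] at ha
      subst ha
      obtain ⟨u, hu⟩ := isConj_iff.mp hconj
      intro y hy hpy
      have hy'ne : u⁻¹ * y * u ≠ 1 := by
        intro h
        apply hy
        have h2 : y = u * (u⁻¹ * y * u) * u⁻¹ := by group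
        rw [h2, h]
        simp
      have h1 : SemiconjBy u⁻¹ y (u⁻¹ * y * u) := by
        show u⁻¹ * y = u⁻¹ * y * u * u⁻¹
        group
      have hord : orderOf (u⁻¹ * y * u) = orderOf y :=
        (SemiconjBy.orderOf_eq u⁻¹ h1).symm
      have hxy' : ¬ p ∣ orderOf (a * (u⁻¹ * y * u)) :=
        hreg _ hy'ne (by rwa [hord])
      have hxy'ne : a * (u⁻¹ * y * u) ≠ 1 := by
        intro h
        obtain ⟨m, hm⟩ := hx
        have hyx : u⁻¹ * y * u = a⁻¹ * (a * (u⁻¹ * y * u)) := by group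
        rw [h, mul_one] at hyx
        have hordp : orderOf (u⁻¹ * y * u) = p ^ m := by
          rw [hyx, orderOf_inv, hm]
        rcases Nat.eq_zero_or_pos m with h0 | hpos
        · rw [h0, pow_zero] at hordp
          exact hy'ne (orderOf_eq_one_iff.mp hordp)
        · have : p ∣ orderOf y := by
            rw [← hord, hordp]
            exact dvd_pow_self p hpos.ne'
          exact hpy this
      have heq : s * y = u * (a * (u⁻¹ * y * u)) * u⁻¹ := by
        rw [← hu]; group
      constructor
      · intro h
        apply hxy'ne
        have h2 : a * (u⁻¹ * y * u) = u⁻¹ * (s * y) * u := by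
          rw [heq]; group
        rw [h2, h]
        simp
      · have hsc : SemiconjBy u (a * (u⁻¹ * y * u)) (s * y) := by
          show u * (a * (u⁻¹ * y * u)) = s * y * u
          rw [heq]; group
        rw [← SemiconjBy.orderOf_eq u hsc]
        exact hxy'
    | one =>
      intro y hy hpy
      simpa using ⟨hy, hpy⟩
    | mul a b _ _ iha ihb =>
      intro y hy hpy
      obtain ⟨h1, h2⟩ := ihb y hy hpy
      have := iha (b * y) h1 h2
      rwa [← mul_assoc] at this
    | inv a _ iha =>
      intro y hy hpy
      -- finiteness: left multiplication by a is a bijection of the set K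
      set K : Set G := {z : G | z ≠ 1 ∧ ¬ p ∣ orderOf z} with hK
      have hyK : y ∈ K := ⟨hy, hpy⟩
      have hfin : Finite K := Subtype.finite
      let f : K → K := fun z => ⟨a * z, (iha z z.2.1 z.2.2).1, (iha z z.2.1 z.2.2).2⟩
      have hinj : Function.Injective f := by
        intro z w h
        have h2 : a * (z : G) = a * (w : G) := congrArg Subtype.val h
        exact Subtype.ext (mul_left_cancel h2)
      have hsurj : Function.Surjective f := Finite.surjective_of_injective hinj
      obtain ⟨z, hz⟩ := hsurj ⟨y, hyK⟩
      have hz' : a * (z : G) = y := congrArg Subtype.val hz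
      have h3 : a⁻¹ * y = (z : G) := by rw [← hz']; group
      rw [h3]
      exact ⟨z.2.1, z.2.2⟩
  refine ⟨Subgroup.normalClosure {x}, Subgroup.normalClosure_normal, ?_,
    Subgroup.subset_normalClosure (Set.mem_singleton x)⟩
  -- the normal closure is a p-group: otherwise it contains a nontrivial
  -- p-regular element y, and key applied to y and y⁻¹ gives a contradiction
  intro g
  have hn0 : orderOf (g : G) ≠ 0 := (orderOf_pos (g : G)).ne'
  set v := (orderOf (g : G)).factorization p with hv
  by_cases hy1 : (g : G) ^ (p ^ v) = 1
  · exact ⟨v, Subtype.ext (by push_cast; simpa using hy1)⟩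
  · exfalso
    set y : G := (g : G) ^ (p ^ v) with hy
    have hyN : y ∈ Subgroup.normalClosure {x} := pow_mem g.2 _
    have hordy : orderOf y = ordCompl[p] (orderOf (g : G)) := by
      rw [hy, orderOf_pow, Nat.gcd_eq_right (Nat.ordProj_dvd _ p)]
    have hpy : ¬ p ∣ orderOf y := by
      rw [hordy]
      exact Nat.not_dvd_ordCompl hp hn0
    have hyinv : y⁻¹ ≠ 1 := inv_ne_one.mpr hy1
    have hpyinv : ¬ p ∣ orderOf y⁻¹ := by rwa [orderOf_inv]
    exact (key y hyN y⁻¹ hyinv hpyinv).1 (mul_inv_cancel y)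
end
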